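/- arXiv:1907.07112 — 3 statements merged into one kernel-verified Lean document; each statement's English description precedes it below -/
import Mathlib

section
/- Let r ≥ 1 and let u : ℝ^r → ℝ be measurable with u(x) ≥ m for all x. Suppose there exist a point x₀ ∈ ℝ^r and R > 0 such that for every natural number k the sublevel set {x : u(x) ≤ m + k + 1} is contained in the closed ball of radius (k+1)R centered at x₀. Then ∫_{ℝ^r} e^{-u(x)} dx ≤ ω_r R^r e^{-m} Σ_{k=0}^∞ (k+1)^r e^{-k}, where ω_r is the Lebesgue volume of the unit ball of ℝ^r; in particular the series Σ_{k=0}^∞ (k+1)^r e^{-k} converges and ∫_{ℝ^r} e^{-u} dx is finite. -/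
open MeasureTheory Set

/-- If `u ≥ m` is measurable on `ℝ^r` and each sublevel set `{u ≤ m + k + 1}` lies in the
closed ball of radius `(k+1)R` around `x₀`, then
`∫ e^{-u} ≤ ω_r R^r e^{-m} Σ_{k} (k+1)^r e^{-k}`, where `ω_r` is the volume of the unit
ball; in particular the series converges and the integral is finite. -/
theorem lintegral_exp_neg_le_of_sublevel_in_balls {r : ℕ} (hr : 1 ≤ r)
    (u : EuclideanSpace ℝ (Fin r) → ℝ) (hu : Measurable u) (m : ℝ) (hge : ∀ x, m ≤ u x)
    (x₀ : EuclideanSpace ℝ (Fin r)) (R : ℝ) (hR : 0 < R)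
    (hsub : ∀ k : ℕ, {x : EuclideanSpace ℝ (Fin r) | u x ≤ m + k + 1} ⊆
      Metric.closedBall x₀ (((k : ℝ) + 1) * R)) :
    Summable (fun k : ℕ => ((k : ℝ) + 1) ^ r * Real.exp (-(k : ℝ))) ∧
    (∫⁻ x : EuclideanSpace ℝ (Fin r), ENNReal.ofReal (Real.exp (-(u x)))) ≤
      MeasureTheory.volume (Metric.closedBall (0 : EuclideanSpace ℝ (Fin r)) 1) *
        ENNReal.ofReal (R ^ r) * ENNReal.ofReal (Real.exp (-m)) *
        ENNReal.ofReal (∑' k : ℕ, ((k : ℝ) + 1) ^ r * Real.exp (-(k : ℝ))) ∧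
    (∫⁻ x : EuclideanSpace ℝ (Fin r), ENNReal.ofReal (Real.exp (-(u x)))) < ⊤ := by
  -- Summability
  have hexp : ‖Real.exp (-1)‖ < 1 := by
    rw [Real.norm_eq_abs, abs_of_pos (Real.exp_pos _)]
    exact Real.exp_lt_one_iff.mpr (by norm_num)
  have hs0 : Summable (fun n : ℕ => (n : ℝ) ^ r * (Real.exp (-1)) ^ n) :=
    summable_pow_mul_geometric_of_norm_lt_one r hexp
  have hs1 : Summable (fun n : ℕ => ((n : ℝ) + 1) ^ r * Real.exp (-(n : ℝ))) := by
    have := ((summable_nat_add_iff 1).mpr hs0).mul_left (Real.exp 1)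
    refine this.congr fun n => ?_
    have h : Real.exp 1 * Real.exp (-1) ^ (n + 1) = Real.exp (-(n : ℝ)) := by
      rw [← Real.exp_nat_mul, ← Real.exp_add]
      congr 1
      push_cast
      ring
    push_cast
    rw [mul_left_comm, h]
  refine ⟨hs1, ?_⟩
  have hnn : ∀ n : ℕ, 0 ≤ ((n : ℝ) + 1) ^ r * Real.exp (-(n : ℝ)) := fun n =>
    mul_nonneg (pow_nonneg (by positivity) _) (Real.exp_pos _).le
  -- Covering sets
  set A : ℕ → Set (EuclideanSpace ℝ (Fin r)) := fun k => {x | m + k ≤ u x ∧ u x ≤ m + k + 1} with hA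
  have hAm : ∀ k, MeasurableSet (A k) := fun k => by
    have : A k = {x | m + k ≤ u x} ∩ {x | u x ≤ m + k + 1} := rfl
    rw [this]
    exact (measurableSet_le measurable_const hu).inter (measurableSet_le hu measurable_const)
  have hcover : (⋃ k, A k) = univ := by
    ext x
    simp only [mem_iUnion, mem_univ, iff_true, hA, mem_setOf_eq]
    refine ⟨⌊u x - m⌋₊, ?_, ?_⟩
    · have := Nat.floor_le (sub_nonneg.mpr (hge x))
      linarith
    · have := Nat.lt_floor_add_one (u x - m)
      linarith
  set ω := MeasureTheory.volume (Metric.closedBall (0 : EuclideanSpace ℝ (Fin r)) 1) with hω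
  have hωlt : ω < ⊤ := measure_closedBall_lt_top
  -- per-term bound
  have hterm : ∀ k : ℕ, (∫⁻ x in A k, ENNReal.ofReal (Real.exp (-(u x)))) ≤
      ω * ENNReal.ofReal (R ^ r) * ENNReal.ofReal (Real.exp (-m)) *
        ENNReal.ofReal (((k : ℝ) + 1) ^ r * Real.exp (-(k : ℝ))) := by
    intro k
    have h1 : (∫⁻ x in A k, ENNReal.ofReal (Real.exp (-(u x)))) ≤
        ENNReal.ofReal (Real.exp (-(m + k))) * volume (A k) := by
      rw [← setLIntegral_const (A k) (ENNReal.ofReal (Real.exp (-(m + k))))]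
      refine setLIntegral_mono measurable_const fun x hx => ?_
      exact ENNReal.ofReal_le_ofReal (Real.exp_le_exp.mpr (by linarith [hx.1]))
    have h2 : volume (A k) ≤ ENNReal.ofReal ((((k : ℝ) + 1) * R) ^ r) * ω := by
      have hsubA : A k ⊆ Metric.closedBall x₀ (((k : ℝ) + 1) * R) :=
        fun x hx => hsub k hx.2
      calc volume (A k) ≤ volume (Metric.closedBall x₀ (((k : ℝ) + 1) * R)) :=
            measure_mono hsubA
        _ = ENNReal.ofReal ((((k : ℝ) + 1) * R) ^ (Module.finrank ℝ (EuclideanSpace ℝ (Fin r)))) * ω := by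
            rw [Measure.addHaar_closedBall' volume x₀ (by positivity)]
        _ = ENNReal.ofReal ((((k : ℝ) + 1) * R) ^ r) * ω := by
            rw [finrank_euclideanSpace, Fintype.card_fin]
    calc (∫⁻ x in A k, ENNReal.ofReal (Real.exp (-(u x)))) ≤
          ENNReal.ofReal (Real.exp (-(m + k))) * (ENNReal.ofReal ((((k : ℝ) + 1) * R) ^ r) * ω) :=
            h1.trans (mul_le_mul_right h2 _)
      _ = ω * ENNReal.ofReal (R ^ r) * ENNReal.ofReal (Real.exp (-m)) *
          ENNReal.ofReal (((k : ℝ) + 1) ^ r * Real.exp (-(k : ℝ))) := by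
        rw [mul_pow, neg_add, Real.exp_add,
          ENNReal.ofReal_mul (Real.exp_pos _).le,
          ENNReal.ofReal_mul (by positivity : (0:ℝ) ≤ ((k:ℝ)+1)^r),
          ENNReal.ofReal_mul (by positivity : (0:ℝ) ≤ ((k:ℝ)+1)^r)]
        ring
  have hbound : (∫⁻ x : EuclideanSpace ℝ (Fin r), ENNReal.ofReal (Real.exp (-(u x)))) ≤
      ω * ENNReal.ofReal (R ^ r) * ENNReal.ofReal (Real.exp (-m)) *
        ENNReal.ofReal (∑' k : ℕ, ((k : ℝ) + 1) ^ r * Real.exp (-(k : ℝ))) := by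
    calc (∫⁻ x : EuclideanSpace ℝ (Fin r), ENNReal.ofReal (Real.exp (-(u x))))
        = ∫⁻ x in ⋃ k, A k, ENNReal.ofReal (Real.exp (-(u x))) := by
          rw [hcover, setLIntegral_univ]
      _ ≤ ∑' k, ∫⁻ x in A k, ENNReal.ofReal (Real.exp (-(u x))) :=
          lintegral_iUnion_le _ _
      _ ≤ ∑' k : ℕ, ω * ENNReal.ofReal (R ^ r) * ENNReal.ofReal (Real.exp (-m)) *
            ENNReal.ofReal (((k : ℝ) + 1) ^ r * Real.exp (-(k : ℝ))) :=
          ENNReal.tsum_le_tsum hterm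
      _ = ω * ENNReal.ofReal (R ^ r) * ENNReal.ofReal (Real.exp (-m)) *
            ∑' k : ℕ, ENNReal.ofReal (((k : ℝ) + 1) ^ r * Real.exp (-(k : ℝ))) := by
          rw [ENNReal.tsum_mul_left]
      _ = ω * ENNReal.ofReal (R ^ r) * ENNReal.ofReal (Real.exp (-m)) *
            ENNReal.ofReal (∑' k : ℕ, ((k : ℝ) + 1) ^ r * Real.exp (-(k : ℝ))) := by
          rw [← ENNReal.ofReal_tsum_of_nonneg hnn hs1]
  refine ⟨hbound, hbound.trans_lt ?_⟩
  exact ENNReal.mul_lt_top (ENNReal.mul_lt_top (ENNReal.mul_lt_top hωlt ENNReal.ofReal_lt_top)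
    ENNReal.ofReal_lt_top) ENNReal.ofReal_lt_top
end

section
/- Let b : [0, ∞) → ℝ be continuous, nonnegative and Lebesgue integrable on [0, ∞), and let a : [0, ∞) → ℝ be differentiable with a′(t) = a(t) − b(t) for all t ≥ 0 and a(0) = ∫₀^∞ e^{−s} b(s) ds. Then for every t ≥ 0 one has a(t) = ∫_t^∞ e^{t−s} b(s) ds, hence 0 ≤ a(t) ≤ ∫_t^∞ b(s) ds, and a(t) → 0 as t → ∞. -/
open Set MeasureTheory Filter Real

/-! Multiplying by the integrating factor `e^{-t}` turns `a' = a - b` into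
`(e^{-t} a)' = -e^{-t} b`, so
`e^{-t} a(t) = a(0) - ∫₀^t e^{-s} b(s) ds = ∫_t^∞ e^{-s} b(s) ds` by the choice of `a(0)`.
The bounds follow from `0 ≤ e^{t-s} ≤ 1` for `s ≥ t`, and the decay from the vanishing of the
tails of the integrable `b`. -/

theorem eq_setIntegral_Ici_of_hasDerivWithinAt_neg {f g : ℝ → ℝ} {c t : ℝ}
    (hf : ∀ x ∈ Ici c, HasDerivWithinAt f (-g x) (Ici c) x) (hg : IntegrableOn g (Ici c))
    (hfc : f c = ∫ s in Ici c, g s) (ht : c ≤ t) :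
    f t = ∫ s in Ici t, g s := by
  have hftc : ∫ s in c..t, -g s = f t - f c := by
    refine intervalIntegral.integral_eq_sub_of_hasDeriv_right_of_le ht
      (fun x hx => ((hf x hx.1).continuousWithinAt).mono Icc_subset_Ici_self)
      (fun x hx => ((hf x hx.1.le).hasDerivAt (Ici_mem_nhds hx.1)).hasDerivWithinAt) ?_
    exact ((intervalIntegrable_iff_integrableOn_Icc_of_le ht).2
      (hg.mono_set Icc_subset_Ici_self)).neg
  have hsplit : (∫ s in c..t, g s) + ∫ s in Ioi t, g s = ∫ s in Ioi c, g s :=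
    intervalIntegral.integral_interval_add_Ioi (hg.mono_set Ioi_subset_Ici_self)
      (hg.mono_set (Ioi_subset_Ici ht))
  rw [intervalIntegral.integral_neg] at hftc
  rw [integral_Ici_eq_integral_Ioi] at hfc ⊢
  linarith

theorem hasDerivWithinAt_exp_neg_mul_of_sub {a b : ℝ → ℝ} {s : Set ℝ} {x : ℝ}
    (ha : HasDerivWithinAt a (a x - b x) s x) :
    HasDerivWithinAt (fun y => exp (-y) * a y) (-(exp (-x) * b x)) s x :=
  (((hasDerivAt_neg x).exp.hasDerivWithinAt (s := s)).mul ha).congr_deriv (by ring)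

theorem integrableOn_exp_sub_mul {b : ℝ → ℝ} {t : ℝ} (hb : IntegrableOn b (Ici t)) :
    IntegrableOn (fun s => exp (t - s) * b s) (Ici t) := by
  refine Integrable.mono hb ((continuous_const.sub continuous_id).rexp.aestronglyMeasurable.mul
    hb.aestronglyMeasurable) ?_
  filter_upwards [ae_restrict_mem measurableSet_Ici] with s hs
  rw [norm_mul, Real.norm_of_nonneg (exp_pos _).le]
  exact mul_le_of_le_one_left (norm_nonneg _) (exp_le_one_iff.2 (sub_nonpos.2 hs))

theorem setIntegral_exp_sub_mul_le {b : ℝ → ℝ} {t : ℝ} (hb : IntegrableOn b (Ici t))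
    (hb_nonneg : ∀ s ∈ Ici t, 0 ≤ b s) :
    ∫ s in Ici t, exp (t - s) * b s ≤ ∫ s in Ici t, b s :=
  setIntegral_mono_on (integrableOn_exp_sub_mul hb) hb measurableSet_Ici fun s hs =>
    mul_le_of_le_one_left (hb_nonneg s hs) (exp_le_one_iff.2 (sub_nonpos.2 hs))

theorem eq_setIntegral_exp_sub_mul_of_hasDerivWithinAt {a b : ℝ → ℝ}
    (hb : IntegrableOn b (Ici 0))
    (ha : ∀ t ∈ Ici (0 : ℝ), HasDerivWithinAt a (a t - b t) (Ici 0) t)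
    (ha0 : a 0 = ∫ s in Ici (0 : ℝ), exp (-s) * b s) {t : ℝ} (ht : 0 ≤ t) :
    a t = ∫ s in Ici t, exp (t - s) * b s := by
  have hweighted : IntegrableOn (fun s => exp (-s) * b s) (Ici 0) := by
    simpa using integrableOn_exp_sub_mul hb
  have htail : exp (-t) * a t = ∫ s in Ici t, exp (-s) * b s :=
    eq_setIntegral_Ici_of_hasDerivWithinAt_neg
      (fun x hx => hasDerivWithinAt_exp_neg_mul_of_sub (ha x hx)) hweighted (by simp [ha0]) ht
  calc a t = exp t * (exp (-t) * a t) := by rw [exp_neg, mul_inv_cancel_left₀ (exp_ne_zero t)]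
    _ = ∫ s in Ici t, exp (t - s) * b s := by
      rw [htail, ← integral_const_mul]
      refine setIntegral_congr_fun measurableSet_Ici fun s _ => ?_
      rw [← mul_assoc, ← exp_add, sub_eq_add_neg]

theorem ode_decay_general (a b : ℝ → ℝ)
    (hb_nonneg : ∀ t ∈ Set.Ici (0 : ℝ), 0 ≤ b t)
    (hb_int : IntegrableOn b (Set.Ici 0))
    (ha : ∀ t ∈ Set.Ici (0 : ℝ), HasDerivWithinAt a (a t - b t) (Set.Ici 0) t)
    (ha0 : a 0 = ∫ s in Set.Ici (0 : ℝ), Real.exp (-s) * b s) :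
    (∀ t ∈ Set.Ici (0 : ℝ), a t = ∫ s in Set.Ici t, Real.exp (t - s) * b s) ∧
    (∀ t ∈ Set.Ici (0 : ℝ), 0 ≤ a t ∧ a t ≤ ∫ s in Set.Ici t, b s) ∧
    Tendsto a atTop (nhds 0) := by
  have hrepr : ∀ t ∈ Ici (0 : ℝ), a t = ∫ s in Ici t, exp (t - s) * b s := fun t ht =>
    eq_setIntegral_exp_sub_mul_of_hasDerivWithinAt hb_int ha ha0 ht
  have hbounds : ∀ t ∈ Ici (0 : ℝ), 0 ≤ a t ∧ a t ≤ ∫ s in Ici t, b s := by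
    intro t ht
    have hb_nonneg_t : ∀ s ∈ Ici t, 0 ≤ b s := fun s hs =>
      hb_nonneg s (mem_Ici.2 (le_trans ht hs))
    rw [hrepr t ht]
    exact ⟨setIntegral_nonneg measurableSet_Ici fun s hs =>
        mul_nonneg (exp_pos _).le (hb_nonneg_t s hs),
      setIntegral_exp_sub_mul_le (hb_int.mono_set (Ici_subset_Ici.2 ht)) hb_nonneg_t⟩
  have htail : Tendsto (fun t => ∫ s in Ici t, b s) atTop (nhds 0) :=
    (tendsto_integral_Ioi_zero tendsto_id).congr fun t => integral_Ici_eq_integral_Ioi.symm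
  refine ⟨hrepr, hbounds, squeeze_zero' ?_ ?_ htail⟩
  · exact (eventually_ge_atTop 0).mono fun t ht => (hbounds t ht).1
  · exact (eventually_ge_atTop 0).mono fun t ht => (hbounds t ht).2

/-- The ODE argument of Lemma 4.14: if `a' = a - b` on `[0, ∞)` with `b` continuous,
nonnegative and integrable, and `a(0) = ∫₀^∞ e^{-s} b(s) ds`, then
`a(t) = ∫_t^∞ e^{t-s} b(s) ds`, hence `0 ≤ a(t) ≤ ∫_t^∞ b(s) ds` and `a(t) → 0`. -/
theorem ode_decay (a b : ℝ → ℝ)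
    (hb_cont : ContinuousOn b (Set.Ici 0))
    (hb_nonneg : ∀ t ∈ Set.Ici (0 : ℝ), 0 ≤ b t)
    (hb_int : IntegrableOn b (Set.Ici 0))
    (ha : ∀ t ∈ Set.Ici (0 : ℝ), HasDerivWithinAt a (a t - b t) (Set.Ici 0) t)
    (ha0 : a 0 = ∫ s in Set.Ici (0 : ℝ), Real.exp (-s) * b s) :
    (∀ t ∈ Set.Ici (0 : ℝ), a t = ∫ s in Set.Ici t, Real.exp (t - s) * b s) ∧
    (∀ t ∈ Set.Ici (0 : ℝ), 0 ≤ a t ∧ a t ≤ ∫ s in Set.Ici t, b s) ∧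
    Tendsto a atTop (nhds 0) :=
  ode_decay_general a b hb_nonneg hb_int ha ha0
end

section
/- Let r ≥ 1, C > 0, and let x : [0, ∞) → ℝ^r be a function such that ‖x(t) − x(s)‖ ≤ C whenever s, t ≥ 0 satisfy |t − s| ≤ 1. Then there exist constants D > 0 and D̃ > 0 and a continuously differentiable map y : [0, ∞) → ℝ^r such that ‖x(t) − y(t)‖ ≤ D and ‖y′(t)‖ ≤ D̃ for all t ≥ 0. -/
/-!
Join the points `x n` at the integer times `n` by segments, but run along each segment with the
speed profile `ψ = smoothTransition`, which is flat at both ends, so that the corners become smooth: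
`y t = x 0 + ∑ₙ ψ (t - n) • (x (n + 1) - x n)`, a locally finite sum. On `[n, n + 1]` the
path `y` stays on the segment `[x n, x (n + 1)]`, of length `≤ C`, so `‖x t - y t‖ ≤ 2C`, and
`y' t = ψ' (t - n) • (x (n + 1) - x n)` is bounded by `C · sup |ψ'|`.
-/

open Filter Finset Real Topology

namespace Real.smoothTransition

lemma deriv_eq_zero_of_nonpos {s : ℝ} (hs : s ≤ 0) : deriv smoothTransition s = 0 :=
  IsLocalMin.deriv_eq_zero <| .of_forall fun u => by
    rw [zero_of_nonpos hs]; exact nonneg u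

lemma deriv_eq_zero_of_one_le {s : ℝ} (hs : 1 ≤ s) : deriv smoothTransition s = 0 :=
  IsLocalMax.deriv_eq_zero <| .of_forall fun u => by
    rw [one_of_one_le hs]; exact le_one u

lemma deriv_eq_zero_of_notMem_Ioo {s : ℝ} (hs : s ∉ Set.Ioo 0 1) :
    deriv smoothTransition s = 0 := by
  rcases le_or_gt s 0 with h | h
  · exact deriv_eq_zero_of_nonpos h
  · exact deriv_eq_zero_of_one_le (not_lt.1 fun h' => hs ⟨h, h'⟩)

lemma exists_pos_norm_deriv_le : ∃ K, 0 < K ∧ ∀ s, ‖deriv smoothTransition s‖ ≤ K := by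
  have hsupp : HasCompactSupport (deriv smoothTransition) :=
    .intro isCompact_Icc fun _ hs =>
      deriv_eq_zero_of_notMem_Ioo fun h => hs (Set.Ioo_subset_Icc_self h)
  obtain ⟨K, hK⟩ := ((smoothTransition.contDiff (n := 1)).continuous_deriv le_rfl
    ).bounded_above_of_compact_support hsupp
  exact ⟨max K 1, by positivity, fun s => (hK s).trans (le_max_left _ _)⟩

end Real.smoothTransition

section SmoothInterp

variable {E : Type*} [NormedAddCommGroup E] [NormedSpace ℝ E]

noncomputable def smoothInterp (a : ℕ → E) (t : ℝ) : E :=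
  a 0 + ∑' n : ℕ, smoothTransition (t - n) • (a (n + 1) - a n)

lemma smoothInterp_eq_sum (a : ℕ → E) {N : ℕ} {t : ℝ} (ht : t ≤ N) :
    smoothInterp a t = a 0 + ∑ n ∈ range N, smoothTransition (t - n) • (a (n + 1) - a n) := by
  refine congrArg (a 0 + ·) (tsum_eq_sum fun n hn => ?_)
  have : (N : ℝ) ≤ n := by exact_mod_cast not_lt.1 (mt mem_range.2 hn)
  rw [smoothTransition.zero_of_nonpos (by linarith), zero_smul]

lemma smoothInterp_eventuallyEq_sum (a : ℕ → E) (t : ℝ) :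
    smoothInterp a =ᶠ[𝓝 t]
      fun s => a 0 + ∑ n ∈ range (⌈t⌉₊ + 1), smoothTransition (s - n) • (a (n + 1) - a n) := by
  have ht : t < ((⌈t⌉₊ + 1 : ℕ) : ℝ) := by push_cast; linarith [Nat.le_ceil t]
  filter_upwards [Iio_mem_nhds ht] with s hs
  exact smoothInterp_eq_sum a hs.le

lemma contDiff_smoothInterp (a : ℕ → E) {k : ℕ∞} : ContDiff ℝ k (smoothInterp a) :=
  contDiff_iff_contDiffAt.2 fun t =>
    (contDiff_const.add (ContDiff.sum fun _ _ =>
      (smoothTransition.contDiff.comp (contDiff_id.sub contDiff_const)).smul contDiff_const)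
      ).contDiffAt.congr_of_eventuallyEq (smoothInterp_eventuallyEq_sum a t)

lemma smoothInterp_eq (a : ℕ → E) (t : ℝ) :
    smoothInterp a t =
      a ⌊t⌋₊ + smoothTransition (t - ⌊t⌋₊) • (a (⌊t⌋₊ + 1) - a ⌊t⌋₊) := by
  set m := ⌊t⌋₊
  have h_full : ∀ n ∈ range m, smoothTransition (t - n) • (a (n + 1) - a n) = a (n + 1) - a n := by
    intro n hn
    have : ((n + 1 : ℕ) : ℝ) ≤ t := (Nat.le_floor_iff' n.succ_ne_zero).1 (mem_range.1 hn)
    rw [smoothTransition.one_of_one_le (by push_cast at this; linarith), one_smul]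
  rw [smoothInterp_eq_sum a (N := m + 1) (by push_cast; exact (Nat.lt_floor_add_one t).le),
    sum_range_succ, sum_congr rfl h_full, sum_range_sub]
  abel

lemma hasDerivAt_smoothInterp (a : ℕ → E) (t : ℝ) :
    HasDerivAt (smoothInterp a)
      (deriv smoothTransition (t - ⌊t⌋₊) • (a (⌊t⌋₊ + 1) - a ⌊t⌋₊)) t := by
  have hterm (n : ℕ) : HasDerivAt (fun s : ℝ => smoothTransition (s - n) • (a (n + 1) - a n))
      (deriv smoothTransition (t - n) • (a (n + 1) - a n)) t := by
    have := (smoothTransition.contDiff (n := 1)).differentiable one_ne_zero (t - n)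
    simpa using (this.hasDerivAt.comp t ((hasDerivAt_id t).sub_const (n : ℝ))).smul_const _
  refine (smoothInterp_eventuallyEq_sum a t).hasDerivAt_iff.2 ?_
  have hsum := (HasDerivAt.fun_sum (u := range (⌈t⌉₊ + 1)) fun n _ => hterm n).const_add (a 0)
  -- `deriv smoothTransition` vanishes off `(0, 1)`, so only the term `n = ⌊t⌋₊` survives
  rwa [sum_eq_single ⌊t⌋₊ (fun n _ hn => ?_) fun hm => ?_] at hsum
  · rw [smoothTransition.deriv_eq_zero_of_notMem_Ioo, zero_smul]
    rintro ⟨h0, h1⟩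
    refine hn ((Nat.floor_eq_iff ?_).2 ⟨?_, ?_⟩).symm <;> linarith [n.cast_nonneg (α := ℝ)]
  · exact absurd (mem_range.2 (Nat.lt_succ_of_le (Nat.floor_le_ceil t))) hm

lemma norm_smoothInterp_sub_le {a : ℕ → E} {C : ℝ} (ha : ∀ n, ‖a (n + 1) - a n‖ ≤ C) (t : ℝ) :
    ‖smoothInterp a t - a ⌊t⌋₊‖ ≤ C := by
  rw [smoothInterp_eq, add_sub_cancel_left, norm_smul,
    norm_of_nonneg (smoothTransition.nonneg _)]
  exact (mul_le_of_le_one_left (norm_nonneg _) (smoothTransition.le_one _)).trans (ha _)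

lemma norm_deriv_smoothInterp_le {a : ℕ → E} {C K : ℝ} (ha : ∀ n, ‖a (n + 1) - a n‖ ≤ C)
    (hK : ∀ s, ‖deriv smoothTransition s‖ ≤ K) (t : ℝ) :
    ‖deriv (smoothInterp a) t‖ ≤ K * C := by
  rw [(hasDerivAt_smoothInterp a t).deriv, norm_smul]
  exact mul_le_mul (hK _) (ha _) (norm_nonneg _) ((norm_nonneg _).trans (hK 0))

end SmoothInterp

theorem c1_interpolation_general {r : ℕ} (C : ℝ) (hC : 0 < C)
    (x : ℝ → EuclideanSpace ℝ (Fin r))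
    (hx : ∀ s t : ℝ, 0 ≤ s → 0 ≤ t → |t - s| ≤ 1 → ‖x t - x s‖ ≤ C) :
    ∃ (D D' : ℝ), 0 < D ∧ 0 < D' ∧
      ∃ y : ℝ → EuclideanSpace ℝ (Fin r), ContDiffOn ℝ 1 y (Set.Ici 0) ∧
        ∀ t ∈ Set.Ici (0 : ℝ), ‖x t - y t‖ ≤ D ∧ ‖derivWithin y (Set.Ici 0) t‖ ≤ D' := by
  obtain ⟨K, hK_pos, hK⟩ := smoothTransition.exists_pos_norm_deriv_le
  let a : ℕ → EuclideanSpace ℝ (Fin r) := fun n => x n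
  have ha (n : ℕ) : ‖a (n + 1) - a n‖ ≤ C := by
    simpa [a] using hx n (n + 1) n.cast_nonneg (by positivity) (by simp)
  refine ⟨2 * C, K * C, by positivity, by positivity, smoothInterp a,
    (contDiff_smoothInterp a (k := 1)).contDiffOn, fun t (ht : 0 ≤ t) => ⟨?_, ?_⟩⟩
  · have hxt : ‖x t - a ⌊t⌋₊‖ ≤ C := hx _ t (Nat.cast_nonneg _) ht <| abs_le.2
      ⟨by linarith [Nat.floor_le ht], by linarith [Nat.lt_floor_add_one t]⟩
    calc ‖x t - smoothInterp a t‖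
        ≤ ‖x t - a ⌊t⌋₊‖ + ‖smoothInterp a t - a ⌊t⌋₊‖ := by
          rw [norm_sub_rev (smoothInterp a t)]; exact norm_sub_le_norm_sub_add_norm_sub _ _ _
      _ ≤ 2 * C := by linarith [norm_smoothInterp_sub_le ha t]
  · rw [(hasDerivAt_smoothInterp a t).differentiableAt.derivWithin (uniqueDiffOn_Ici 0 t ht)]
    exact norm_deriv_smoothInterp_le ha hK t

/-- `C¹`-interpolation (Section 4.5, Equation (48)): a path `x : [0, ∞) → ℝ^r` whose
oscillation on time intervals of length `≤ 1` is bounded by `C` can be approximated within a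
uniform distance `D` by a `C¹` path `y` with uniformly bounded derivative. -/
theorem c1_interpolation {r : ℕ} (hr : 1 ≤ r) (C : ℝ) (hC : 0 < C)
    (x : ℝ → EuclideanSpace ℝ (Fin r))
    (hx : ∀ s t : ℝ, 0 ≤ s → 0 ≤ t → |t - s| ≤ 1 → ‖x t - x s‖ ≤ C) :
    ∃ (D D' : ℝ), 0 < D ∧ 0 < D' ∧
      ∃ y : ℝ → EuclideanSpace ℝ (Fin r), ContDiffOn ℝ 1 y (Set.Ici 0) ∧
        ∀ t ∈ Set.Ici (0 : ℝ), ‖x t - y t‖ ≤ D ∧ ‖derivWithin y (Set.Ici 0) t‖ ≤ D' :=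
  c1_interpolation_general C hC x hx
end
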